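/- Let $D_\pi(V) = u_\pi + \gamma T_\pi V$ with $T_\pi$ row-stochastic, $\gamma\in[0,1)$, and let $V_\pi$ be its unique fixed point. Let $m \ge 0$ be a constant, $\mathbf{1}$ the all-ones vector, and consider the iteration $V_{k+1} = D_\pi(V_k + m\mathbf{1})$ starting at any $V_0$ with $V_0 \ge D_\pi(V_0)$. Then $\lim_{k\to\infty} V_k = V_\pi + \frac{\gamma}{1-\gamma} m \mathbf{1}$, and $\lim_{k\to\infty}(V_k - D_\pi(V_k)) = \gamma m \mathbf{1}$. -/

import Mathlib

open Filter

private lemma mulVec_norm_le {n : ℕ} (Tp : Matrix (Fin n) (Fin n) ℝ)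
    (hT0 : ∀ i j, 0 ≤ Tp i j) (hT1 : ∀ i, ∑ j, Tp i j = 1)
    (v : Fin n → ℝ) : ‖Tp.mulVec v‖ ≤ ‖v‖ := by
  rw [pi_norm_le_iff_of_nonneg (norm_nonneg v)]
  intro i
  have : |∑ j, Tp i j * v j| ≤ ∑ j, Tp i j * ‖v‖ := by
    refine (Finset.abs_sum_le_sum_abs _ _).trans (Finset.sum_le_sum fun j _ => ?_)
    rw [abs_mul, abs_of_nonneg (hT0 i j)]
    have hvj : |v j| ≤ ‖v‖ := by simpa using norm_le_pi_norm v j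
    exact mul_le_mul_of_nonneg_left hvj (hT0 i j)
  simpa [Matrix.mulVec, dotProduct, Real.norm_eq_abs, ← Finset.sum_mul, hT1 i] using this

private lemma mulVec_one {n : ℕ} (Tp : Matrix (Fin n) (Fin n) ℝ)
    (hT1 : ∀ i, ∑ j, Tp i j = 1) : Tp.mulVec (1 : Fin n → ℝ) = 1 := by
  funext i; simp [Matrix.mulVec, dotProduct, hT1 i]

theorem stmt11 (n : ℕ) (Tp : Matrix (Fin n) (Fin n) ℝ) (up : Fin n → ℝ) (γ m : ℝ)
    (hT0 : ∀ i j, 0 ≤ Tp i j) (hT1 : ∀ i, ∑ j, Tp i j = 1)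
    (hγ0 : 0 ≤ γ) (hγ1 : γ < 1) (hm : 0 ≤ m)
    (Vp : Fin n → ℝ) (hVp : up + γ • Tp.mulVec Vp = Vp)
    (Vs : ℕ → Fin n → ℝ)
    (hiter : ∀ k, Vs (k + 1) = up + γ • Tp.mulVec (Vs k + m • (1 : Fin n → ℝ)))
    (h0 : up + γ • Tp.mulVec (Vs 0) ≤ Vs 0) :
    Filter.Tendsto Vs Filter.atTop
        (nhds (Vp + (γ / (1 - γ) * m) • (1 : Fin n → ℝ))) ∧
    Filter.Tendsto (fun k => Vs k - (up + γ • Tp.mulVec (Vs k))) Filter.atTop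
        (nhds ((γ * m) • (1 : Fin n → ℝ))) := by
  have h1γ : (1 : ℝ) - γ ≠ 0 := by linarith
  set c : ℝ := γ / (1 - γ) * m with hc
  set W : Fin n → ℝ := Vp + c • (1 : Fin n → ℝ) with hWdef
  -- W is a fixed point of the iteration map
  have hcm : c * (1 - γ) = γ * m := by rw [hc, div_mul_eq_mul_div, div_mul_cancel₀ _ h1γ]
  have hcfix : γ * (c + m) = c := by rw [mul_add, ← hcm]; ring
  have hW : W = up + γ • Tp.mulVec (W + m • (1 : Fin n → ℝ)) := by
    rw [hWdef]
    rw [show Vp + c • (1:Fin n → ℝ) + m • (1:Fin n → ℝ) = Vp + (c + m) • (1:Fin n → ℝ) by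
      module]
    rw [Matrix.mulVec_add, Matrix.mulVec_smul, mulVec_one Tp hT1, smul_add, smul_smul, hcfix,
      ← add_assoc, hVp]
  -- error recursion
  have herr : ∀ k, Vs (k + 1) - W = γ • Tp.mulVec (Vs k - W) := by
    intro k
    rw [hiter k, Matrix.mulVec_sub, smul_sub]
    nth_rewrite 1 [hW]
    rw [Matrix.mulVec_add, Matrix.mulVec_add, smul_add, smul_add]
    abel
  have hbound : ∀ k, ‖Vs k - W‖ ≤ γ ^ k * ‖Vs 0 - W‖ := by
    intro k
    induction k with
    | zero => simp
    | succ k ih =>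
      rw [herr k, norm_smul, Real.norm_eq_abs, abs_of_nonneg hγ0]
      calc γ * ‖Tp.mulVec (Vs k - W)‖ ≤ γ * ‖Vs k - W‖ :=
            mul_le_mul_of_nonneg_left (mulVec_norm_le Tp hT0 hT1 _) hγ0
        _ ≤ γ * (γ ^ k * ‖Vs 0 - W‖) := mul_le_mul_of_nonneg_left ih hγ0
        _ = γ ^ (k + 1) * ‖Vs 0 - W‖ := by ring
  have htend : Tendsto Vs atTop (nhds W) := by
    rw [tendsto_iff_norm_sub_tendsto_zero]
    refine squeeze_zero (fun k => norm_nonneg _) hbound ?_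
    simpa using (tendsto_pow_atTop_nhds_zero_of_lt_one hγ0 hγ1).mul_const ‖Vs 0 - W‖
  refine ⟨htend, ?_⟩
  -- second limit: Vs k - D(Vs k) = Vs k - Vs (k+1) + (γ m) • 1
  have hkey : ∀ k, Vs k - (up + γ • Tp.mulVec (Vs k)) =
      Vs k - Vs (k + 1) + (γ * m) • (1 : Fin n → ℝ) := by
    intro k
    rw [hiter k, Matrix.mulVec_add, Matrix.mulVec_smul, mulVec_one Tp hT1, smul_add, smul_smul]
    abel
  have h2 : Tendsto (fun k => Vs k - Vs (k + 1) + (γ * m) • (1 : Fin n → ℝ)) atTop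
      (nhds ((γ * m) • (1 : Fin n → ℝ))) := by
    have := (htend.sub (htend.comp (tendsto_add_atTop_nat 1))).add
      (tendsto_const_nhds (x := (γ * m) • (1 : Fin n → ℝ)) (f := atTop))
    simpa using this
  exact h2.congr fun k => (hkey k).symm
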